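/- Let (H, α) be a monoidal Hom-bialgebra with Drinfeld twist σ and inverse ϱ, and let (A, α_A) be a left H-Hom-module algebra. Define a ∘ b := (ϱ⁽¹⁾·a)(ϱ⁽²⁾·b) for a, b ∈ A. Then (A, α_A², ∘, 1_A) is a monoidal Hom-algebra: α_A²(a∘b) = α_A²(a)∘α_A²(b), α_A²(a)∘(b∘c) = (a∘b)∘α_A²(c), and 1_A∘a = a∘1_A = α_A²(a). -/

import Mathlib

open TensorProduct

noncomputable section
namespace HomTwist

variable {k : Type*} [CommRing k]

section Defs
variable {H₁ H₂ A B : Type*} [AddCommGroup H₁] [Module k H₁] [AddCommGroup H₂] [Module k H₂]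
  [AddCommGroup A] [Module k A] [AddCommGroup B] [Module k B]

/-- The componentwise "action" of `H₁ ⊗ H₂` on `A ⊗ B` induced by bilinear actions
`f : H₁ → A → A` and `g : H₂ → B → B`:  `(h₁ ⊗ h₂) • (a ⊗ b) = (f h₁ a) ⊗ (g h₂ b)`. -/
def pairMap (f : H₁ →ₗ[k] A →ₗ[k] A) (g : H₂ →ₗ[k] B →ₗ[k] B) :
    (H₁ ⊗[k] H₂) →ₗ[k] (A ⊗[k] B) →ₗ[k] A ⊗[k] B :=
  TensorProduct.lift (((TensorProduct.mapBilinear (RingHom.id k) A B A B).comp f).compl₂ g)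

end Defs

section Structures
variable {H : Type*} [AddCommGroup H] [Module k H]

/-- Componentwise product on `H ⊗ H` induced by a bilinear multiplication on `H`. -/
def mulT (mul : H →ₗ[k] H →ₗ[k] H) : (H ⊗[k] H) →ₗ[k] (H ⊗[k] H) →ₗ[k] H ⊗[k] H :=
  pairMap mul mul

/-- Componentwise product on `H ⊗ (H ⊗ H)`. -/
def mulT3 (mul : H →ₗ[k] H →ₗ[k] H) :
    (H ⊗[k] (H ⊗[k] H)) →ₗ[k] (H ⊗[k] (H ⊗[k] H)) →ₗ[k] H ⊗[k] (H ⊗[k] H) :=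
  pairMap mul (mulT mul)

/-- `(r ⊗ R) ↦ r⁽¹⁾ ⊗ (R⁽¹⁾ ⊗ r⁽²⁾R⁽²⁾)`. -/
def hexA (mul : H →ₗ[k] H →ₗ[k] H) :
    ((H ⊗[k] H) ⊗[k] (H ⊗[k] H)) →ₗ[k] H ⊗[k] (H ⊗[k] H) :=
  (TensorProduct.assoc k H H H).toLinearMap
    ∘ₗ TensorProduct.map LinearMap.id (TensorProduct.lift mul)
    ∘ₗ (TensorProduct.tensorTensorTensorComm k H H H H).toLinearMap

/-- `(r ⊗ R) ↦ r⁽¹⁾R⁽¹⁾ ⊗ (R⁽²⁾ ⊗ r⁽²⁾)`. -/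
def hexB (mul : H →ₗ[k] H →ₗ[k] H) :
    ((H ⊗[k] H) ⊗[k] (H ⊗[k] H)) →ₗ[k] H ⊗[k] (H ⊗[k] H) :=
  TensorProduct.map (TensorProduct.lift mul) (TensorProduct.comm k H H).toLinearMap
    ∘ₗ (TensorProduct.tensorTensorTensorComm k H H H H).toLinearMap

/-- Axioms of a monoidal Hom-bialgebra (Caenepeel–Goyvaerts). -/
structure IsMonHomBialgebra (mul : H →ₗ[k] H →ₗ[k] H) (one : H) (alpha : H ≃ₗ[k] H)
    (comul : H →ₗ[k] H ⊗[k] H) (counit : H →ₗ[k] k) : Prop where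
  alpha_mul : ∀ a b, alpha (mul a b) = mul (alpha a) (alpha b)
  hom_assoc : ∀ a b c, mul (alpha a) (mul b c) = mul (mul a b) (alpha c)
  alpha_one : alpha one = one
  one_mul' : ∀ a, mul one a = alpha a
  mul_one' : ∀ a, mul a one = alpha a
  comul_alpha : ∀ c, comul (alpha c)
      = TensorProduct.map alpha.toLinearMap alpha.toLinearMap (comul c)
  hom_coassoc : ∀ c,
      TensorProduct.map alpha.symm.toLinearMap comul (comul c)
        = TensorProduct.assoc k H H H
            (TensorProduct.map comul alpha.symm.toLinearMap (comul c))
  counit_alpha : ∀ c, counit (alpha c) = counit c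
  counit_id : ∀ c, TensorProduct.lid k H
      (TensorProduct.map counit LinearMap.id (comul c)) = alpha.symm c
  id_counit : ∀ c, TensorProduct.rid k H
      (TensorProduct.map LinearMap.id counit (comul c)) = alpha.symm c
  comul_mul : ∀ a b, comul (mul a b) = mulT mul (comul a) (comul b)
  comul_one : comul one = one ⊗ₜ[k] one
  counit_mul : ∀ a b, counit (mul a b) = counit a * counit b
  counit_one : counit one = 1

/-- Axioms of a (Makhlouf–Silvestrov) Hom-bialgebra (with bijective structure map). -/
structure IsHomBialgebra (mul : H →ₗ[k] H →ₗ[k] H) (one : H) (alpha : H ≃ₗ[k] H)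
    (comul : H →ₗ[k] H ⊗[k] H) (counit : H →ₗ[k] k) : Prop where
  alpha_mul : ∀ a b, alpha (mul a b) = mul (alpha a) (alpha b)
  hom_assoc : ∀ a b c, mul (alpha a) (mul b c) = mul (mul a b) (alpha c)
  alpha_one : alpha one = one
  one_mul' : ∀ a, mul one a = alpha a
  mul_one' : ∀ a, mul a one = alpha a
  comul_alpha : ∀ c, comul (alpha c)
      = TensorProduct.map alpha.toLinearMap alpha.toLinearMap (comul c)
  hom_coassoc : ∀ c,
      TensorProduct.map alpha.toLinearMap comul (comul c)
        = TensorProduct.assoc k H H H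
            (TensorProduct.map comul alpha.toLinearMap (comul c))
  counit_alpha : ∀ c, counit (alpha c) = counit c
  counit_id : ∀ c, TensorProduct.lid k H
      (TensorProduct.map counit LinearMap.id (comul c)) = alpha c
  id_counit : ∀ c, TensorProduct.rid k H
      (TensorProduct.map LinearMap.id counit (comul c)) = alpha c
  comul_mul : ∀ a b, comul (mul a b) = mulT mul (comul a) (comul b)
  comul_one : comul one = one ⊗ₜ[k] one
  counit_mul : ∀ a b, counit (mul a b) = counit a * counit b
  counit_one : counit one = 1

/-- Axioms of an ordinary (possibly noncommutative) bialgebra, given by raw data. -/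
structure IsBialgebra (mul : H →ₗ[k] H →ₗ[k] H) (one : H)
    (comul : H →ₗ[k] H ⊗[k] H) (counit : H →ₗ[k] k) : Prop where
  assoc : ∀ a b c, mul (mul a b) c = mul a (mul b c)
  one_mul' : ∀ a, mul one a = a
  mul_one' : ∀ a, mul a one = a
  coassoc : ∀ c, TensorProduct.map LinearMap.id comul (comul c)
      = TensorProduct.assoc k H H H (TensorProduct.map comul LinearMap.id (comul c))
  counit_id : ∀ c, TensorProduct.lid k H
      (TensorProduct.map counit LinearMap.id (comul c)) = c
  id_counit : ∀ c, TensorProduct.rid k H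
      (TensorProduct.map LinearMap.id counit (comul c)) = c
  comul_mul : ∀ a b, comul (mul a b) = mulT mul (comul a) (comul b)
  comul_one : comul one = one ⊗ₜ[k] one
  counit_mul : ∀ a b, counit (mul a b) = counit a * counit b
  counit_one : counit one = 1

/-- A Drinfeld twist `σ` (with inverse `ϱ`) for a monoidal Hom-bialgebra. -/
structure IsTwist (mul : H →ₗ[k] H →ₗ[k] H) (one : H) (alpha : H ≃ₗ[k] H)
    (comul : H →ₗ[k] H ⊗[k] H) (counit : H →ₗ[k] k) (σ ϱ : H ⊗[k] H) : Prop where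
  mul_inv : mulT mul σ ϱ = one ⊗ₜ[k] one
  inv_mul : mulT mul ϱ σ = one ⊗ₜ[k] one
  T1 : TensorProduct.map alpha.toLinearMap alpha.toLinearMap σ = σ
  T2l : TensorProduct.lid k H (TensorProduct.map counit LinearMap.id σ) = one
  T2r : TensorProduct.rid k H (TensorProduct.map LinearMap.id counit σ) = one
  T3 : TensorProduct.map LinearMap.id (mulT mul σ)
        (TensorProduct.map LinearMap.id comul σ)
      = TensorProduct.assoc k H H H
          (TensorProduct.map (mulT mul σ) LinearMap.id
            (TensorProduct.map comul LinearMap.id σ))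

/-- The `R`-matrix axioms (Q1)–(Q4) for a monoidal Hom-bialgebra. -/
structure IsRMatrix (mul : H →ₗ[k] H →ₗ[k] H) (alpha : H ≃ₗ[k] H)
    (comul : H →ₗ[k] H ⊗[k] H) (R : H ⊗[k] H) : Prop where
  Q1 : TensorProduct.map alpha.toLinearMap alpha.toLinearMap R = R
  Q2 : ∀ h, mulT mul R (comul h)
      = mulT mul (TensorProduct.comm k H H (comul h)) R
  Q3 : TensorProduct.assoc k H H H (TensorProduct.map comul LinearMap.id R)
      = hexA mul (R ⊗ₜ[k] R)
  Q4 : TensorProduct.map LinearMap.id comul R = hexB mul (R ⊗ₜ[k] R)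

/-- Axioms of a monoidal Hom-algebra. -/
structure IsMonHomAlgebra {A : Type*} [AddCommGroup A] [Module k A]
    (mul : A →ₗ[k] A →ₗ[k] A) (one : A) (alpha : A ≃ₗ[k] A) : Prop where
  alpha_mul : ∀ a b, alpha (mul a b) = mul (alpha a) (alpha b)
  hom_assoc : ∀ a b c, mul (alpha a) (mul b c) = mul (mul a b) (alpha c)
  alpha_one : alpha one = one
  one_mul' : ∀ a, mul one a = alpha a
  mul_one' : ∀ a, mul a one = alpha a

/-- Axioms of a monoidal Hom-coalgebra. -/
structure IsMonHomCoalgebra {C : Type*} [AddCommGroup C] [Module k C]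
    (comul : C →ₗ[k] C ⊗[k] C) (counit : C →ₗ[k] k) (alpha : C ≃ₗ[k] C) : Prop where
  comul_alpha : ∀ c, comul (alpha c)
      = TensorProduct.map alpha.toLinearMap alpha.toLinearMap (comul c)
  hom_coassoc : ∀ c,
      TensorProduct.map alpha.symm.toLinearMap comul (comul c)
        = TensorProduct.assoc k C C C
            (TensorProduct.map comul alpha.symm.toLinearMap (comul c))
  counit_alpha : ∀ c, counit (alpha c) = counit c
  counit_id : ∀ c, TensorProduct.lid k C
      (TensorProduct.map counit LinearMap.id (comul c)) = alpha.symm c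
  id_counit : ∀ c, TensorProduct.rid k C
      (TensorProduct.map LinearMap.id counit (comul c)) = alpha.symm c

/-- Axioms of a left `H`-Hom-module. -/
structure IsHomModule {M : Type*} [AddCommGroup M] [Module k M]
    (mul : H →ₗ[k] H →ₗ[k] H) (one : H) (alpha : H ≃ₗ[k] H)
    (alM : M ≃ₗ[k] M) (act : H →ₗ[k] M →ₗ[k] M) : Prop where
  compat : ∀ h m, alM (act h m) = act (alpha h) (alM m)
  hom_smul : ∀ h h' m, act (alpha h) (act h' m) = act (mul h h') (alM m)
  one_smul' : ∀ m, act one m = alM m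

/-- The twisted coproduct `Δᵠ(x) = (σ Δ(x)) ϱ`. -/
def twistComul (mul : H →ₗ[k] H →ₗ[k] H) (comul : H →ₗ[k] H ⊗[k] H)
    (σ ϱ : H ⊗[k] H) : H →ₗ[k] H ⊗[k] H :=
  ((mulT mul).flip ϱ) ∘ₗ (mulT mul σ) ∘ₗ comul

end Structures
end HomTwist
end

/-!
A monoidal Hom-algebra `(T, μ, 1, α)` carries the associative unital product
`x ⋆ y = μ(α⁻¹x, α⁻¹y)` (`untwistMul`), preserved by every linear map compatible with `μ`, `α`
and `1`; so `⋆`-inverses are unique and invert products as in a monoid. In `H ⊗ H` and `H ⊗ H ⊗ H` this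
transports the twist axioms from `σ` to `ϱ`: `ϱ` is `α ⊗ α`-invariant, `(ε ⊗ id)ϱ = (id ⊗ ε)ϱ = 1`,
and inverting both sides of the cocycle condition gives
`ϱ⁽¹⁾ ⊗ Δ(ϱ⁽²⁾)ϱ = Δ(ϱ⁽¹⁾)ϱ ⊗ ϱ⁽²⁾`. Expanding `α²a ∘ (b ∘ c)` and `(a ∘ b) ∘ α²c` with the
module-algebra axiom, they become one trilinear expression evaluated at the two sides of this
identity, glued by the Hom-associativity of `A`; the unit laws come from the counit identities.
-/

namespace HomTwist
open TensorProduct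

variable {k : Type*} [CommRing k]

@[simp] lemma pairMap_tmul {H₁ H₂ A B : Type*} [AddCommGroup H₁] [Module k H₁]
    [AddCommGroup H₂] [Module k H₂] [AddCommGroup A] [Module k A] [AddCommGroup B] [Module k B]
    (f : H₁ →ₗ[k] A →ₗ[k] A) (g : H₂ →ₗ[k] B →ₗ[k] B) (h : H₁) (x : H₂) (a : A) (b : B) :
    pairMap f g (h ⊗ₜ x) (a ⊗ₜ b) = f h a ⊗ₜ g x b := by
  simp [pairMap]

@[simp] lemma mulT_tmul {H : Type*} [AddCommGroup H] [Module k H] (mul : H →ₗ[k] H →ₗ[k] H)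
    (a b c d : H) : mulT mul (a ⊗ₜ b) (c ⊗ₜ d) = mul a c ⊗ₜ mul b d :=
  pairMap_tmul mul mul a b c d

structure MonoidalHomAlgebra (k T : Type*) [CommRing k] [AddCommGroup T] [Module k T] where
  mul : T →ₗ[k] T →ₗ[k] T
  one : T
  alpha : T ≃ₗ[k] T
  isMonHomAlgebra : IsMonHomAlgebra mul one alpha

namespace MonoidalHomAlgebra

variable {T S U : Type*} [AddCommGroup T] [Module k T] [AddCommGroup S] [Module k S]
  [AddCommGroup U] [Module k U]

def tensor (A : MonoidalHomAlgebra k T) (B : MonoidalHomAlgebra k S) :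
    MonoidalHomAlgebra k (T ⊗[k] S) where
  mul := pairMap A.mul B.mul
  one := A.one ⊗ₜ B.one
  alpha := TensorProduct.congr A.alpha B.alpha
  isMonHomAlgebra := by
    obtain ⟨hA₁, hA₂, hA₃, hA₄, hA₅⟩ := A.isMonHomAlgebra
    obtain ⟨hB₁, hB₂, hB₃, hB₄, hB₅⟩ := B.isMonHomAlgebra
    constructor
    · intro x y
      induction x using TensorProduct.induction_on with
      | zero => simp
      | add x x' hx hx' => simp only [map_add, LinearMap.add_apply, hx, hx']
      | tmul a b =>
        induction y using TensorProduct.induction_on with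
        | zero => simp
        | add y y' hy hy' => simp only [map_add, hy, hy']
        | tmul c d => simp [hA₁, hB₁]
    · intro x y z
      induction x using TensorProduct.induction_on with
      | zero => simp
      | add x x' hx hx' => simp only [map_add, LinearMap.add_apply, hx, hx']
      | tmul a b =>
        induction y using TensorProduct.induction_on with
        | zero => simp
        | add y y' hy hy' => simp only [map_add, LinearMap.add_apply, hy, hy']
        | tmul c d =>
          induction z using TensorProduct.induction_on with
          | zero => simp
          | add z z' hz hz' => simp only [map_add, hz, hz']
          | tmul e f => simp [hA₂, hB₂]
    · simp [hA₃, hB₃]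
    · intro x
      induction x using TensorProduct.induction_on with
      | zero => simp
      | add x x' hx hx' => simp only [map_add, hx, hx']
      | tmul a b => simp [hA₄, hB₄]
    · intro x
      induction x using TensorProduct.induction_on with
      | zero => simp
      | add x x' hx hx' => simp only [map_add, LinearMap.add_apply, hx, hx']
      | tmul a b => simp [hA₅, hB₅]

variable (A : MonoidalHomAlgebra k T) (B : MonoidalHomAlgebra k S) (C : MonoidalHomAlgebra k U)

@[simp] lemma tensor_mul_tmul (a b : T) (c d : S) :
    (A.tensor B).mul (a ⊗ₜ c) (b ⊗ₜ d) = A.mul a b ⊗ₜ B.mul c d :=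
  pairMap_tmul _ _ _ _ _ _

@[simp] lemma tensor_one : (A.tensor B).one = A.one ⊗ₜ B.one := rfl

@[simp] lemma tensor_alpha_tmul (a : T) (c : S) :
    (A.tensor B).alpha (a ⊗ₜ c) = A.alpha a ⊗ₜ B.alpha c := rfl

@[simp] lemma tensor_alpha_symm_tmul (a : T) (c : S) :
    (A.tensor B).alpha.symm (a ⊗ₜ c) = A.alpha.symm a ⊗ₜ B.alpha.symm c := rfl

lemma alpha_symm_one : A.alpha.symm A.one = A.one := by
  rw [LinearEquiv.symm_apply_eq, A.isMonHomAlgebra.alpha_one]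

lemma alpha_symm_mul (x y : T) :
    A.alpha.symm (A.mul x y) = A.mul (A.alpha.symm x) (A.alpha.symm y) := by
  rw [LinearEquiv.symm_apply_eq, A.isMonHomAlgebra.alpha_mul]; simp

def untwistMul (x y : T) : T := A.mul (A.alpha.symm x) (A.alpha.symm y)

lemma untwistMul_assoc (x y z : T) :
    A.untwistMul (A.untwistMul x y) z = A.untwistMul x (A.untwistMul y z) := by
  simp only [untwistMul, alpha_symm_mul]
  rw [← A.alpha.apply_symm_apply (A.alpha.symm z), ← A.isMonHomAlgebra.hom_assoc]
  simp

lemma one_untwistMul (x : T) : A.untwistMul A.one x = x := by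
  simp [untwistMul, alpha_symm_one, A.isMonHomAlgebra.one_mul']

lemma untwistMul_one (x : T) : A.untwistMul x A.one = x := by
  simp [untwistMul, alpha_symm_one, A.isMonHomAlgebra.mul_one']

def IsInvPair (x y : T) : Prop := A.untwistMul x y = A.one ∧ A.untwistMul y x = A.one

lemma isInvPair_one : A.IsInvPair A.one A.one := ⟨A.one_untwistMul _, A.one_untwistMul _⟩

variable {A} in
lemma IsInvPair.unique {x y y' : T} (h : A.IsInvPair x y) (h' : A.IsInvPair x y') : y = y' := by
  simpa [h.2, h'.1, one_untwistMul, untwistMul_one] using (A.untwistMul_assoc y x y').symm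

variable {A} in
lemma IsInvPair.untwistMul {x x' y y' : T} (h : A.IsInvPair x y) (h' : A.IsInvPair x' y') :
    A.IsInvPair (A.untwistMul x x') (A.untwistMul y' y) := by
  constructor
  · rw [untwistMul_assoc, ← A.untwistMul_assoc x', h'.1, one_untwistMul, h.1]
  · rw [untwistMul_assoc, ← A.untwistMul_assoc y, h.2, one_untwistMul, h'.2]

structure IsHom (f : T →ₗ[k] S) : Prop where
  map_mul : ∀ x y, f (A.mul x y) = B.mul (f x) (f y)
  map_alpha : ∀ x, f (A.alpha x) = B.alpha (f x)
  map_one : f A.one = B.one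

variable {A B C}

lemma IsHom.map_alpha_symm {f : T →ₗ[k] S} (hf : IsHom A B f) (x : T) :
    f (A.alpha.symm x) = B.alpha.symm (f x) := by
  rw [LinearEquiv.eq_symm_apply, ← hf.map_alpha, A.alpha.apply_symm_apply]

lemma IsHom.map_untwistMul {f : T →ₗ[k] S} (hf : IsHom A B f) (x y : T) :
    f (A.untwistMul x y) = B.untwistMul (f x) (f y) := by
  simp [untwistMul, hf.map_mul, hf.map_alpha_symm]

lemma IsInvPair.map {f : T →ₗ[k] S} (hf : IsHom A B f) {x y : T} (h : A.IsInvPair x y) :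
    B.IsInvPair (f x) (f y) := by
  simp only [IsInvPair, ← hf.map_untwistMul, h.1, h.2, hf.map_one, and_self]

lemma IsHom.comp {f : T →ₗ[k] S} {g : S →ₗ[k] U} (hg : IsHom B C g) (hf : IsHom A B f) :
    IsHom A C (g ∘ₗ f) :=
  ⟨by simp [hf.map_mul, hg.map_mul], by simp [hf.map_alpha, hg.map_alpha],
    by simp [hf.map_one, hg.map_one]⟩

variable (A) in
lemma isHom_id : IsHom A A LinearMap.id := ⟨fun _ _ => rfl, fun _ => rfl, rfl⟩

variable (A) in
lemma isHom_alpha : IsHom A A A.alpha.toLinearMap :=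
  ⟨A.isMonHomAlgebra.alpha_mul, fun _ => rfl, A.isMonHomAlgebra.alpha_one⟩

variable {T' S' : Type*} [AddCommGroup T'] [Module k T'] [AddCommGroup S'] [Module k S']
  {A' : MonoidalHomAlgebra k T'} {B' : MonoidalHomAlgebra k S'}

lemma isHom_tensor_of_tmul {f : T ⊗[k] S →ₗ[k] U}
    (hmul : ∀ a b c d, f (A.mul a b ⊗ₜ B.mul c d) = C.mul (f (a ⊗ₜ c)) (f (b ⊗ₜ d)))
    (halpha : ∀ a c, f (A.alpha a ⊗ₜ B.alpha c) = C.alpha (f (a ⊗ₜ c)))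
    (hone : f (A.one ⊗ₜ B.one) = C.one) :
    IsHom (A.tensor B) C f := by
  refine ⟨fun x y => ?_, fun x => ?_, hone⟩
  · induction x using TensorProduct.induction_on with
    | zero => simp
    | add x x' hx hx' => simp only [map_add, LinearMap.add_apply, hx, hx']
    | tmul a c =>
      induction y using TensorProduct.induction_on with
      | zero => simp
      | add y y' hy hy' => simp only [map_add, hy, hy']
      | tmul b d => simpa using hmul a b c d
  · induction x using TensorProduct.induction_on with
    | zero => simp
    | add x x' hx hx' => simp only [map_add, hx, hx']
    | tmul a c => simpa using halpha a c

lemma IsHom.tensorMap {f : T →ₗ[k] T'} {g : S →ₗ[k] S'} (hf : IsHom A A' f) (hg : IsHom B B' g) :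
    IsHom (A.tensor B) (A'.tensor B') (TensorProduct.map f g) :=
  isHom_tensor_of_tmul (by simp [hf.map_mul, hg.map_mul]) (by simp [hf.map_alpha, hg.map_alpha])
    (by simp [hf.map_one, hg.map_one])

variable (A B C) in
lemma isHom_assoc :
    IsHom ((A.tensor B).tensor C) (A.tensor (B.tensor C)) (TensorProduct.assoc k T S U) := by
  refine ⟨fun x y => ?_, fun x => ?_, rfl⟩
  · induction x using TensorProduct.induction_on with
    | zero => simp
    | add x x' hx hx' => simp only [map_add, LinearMap.add_apply, hx, hx']
    | tmul ab c =>
      induction y using TensorProduct.induction_on with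
      | zero => simp
      | add y y' hy hy' => simp only [map_add, hy, hy']
      | tmul de f =>
        induction ab using TensorProduct.induction_on with
        | zero => simp
        | add x x' hx hx' => simp only [add_tmul, map_add, LinearMap.add_apply, hx, hx']
        | tmul a b =>
          induction de using TensorProduct.induction_on with
          | zero => simp
          | add y y' hy hy' => simp only [add_tmul, map_add, hy, hy']
          | tmul d e => simp
  · induction x using TensorProduct.induction_on with
    | zero => simp
    | add x x' hx hx' => simp only [map_add, hx, hx']
    | tmul ab c =>
      induction ab using TensorProduct.induction_on with
      | zero => simp
      | add x x' hx hx' => simp only [add_tmul, map_add, hx, hx']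
      | tmul a b => simp

variable (A) in
lemma isHom_one_tmul : IsHom B (A.tensor B) (TensorProduct.mk k T S A.one) :=
  ⟨fun x y => by simp [A.isMonHomAlgebra.mul_one', A.isMonHomAlgebra.alpha_one],
    fun x => by simp [A.isMonHomAlgebra.alpha_one], rfl⟩

variable (B) in
lemma isHom_tmul_one : IsHom A (A.tensor B) ((TensorProduct.mk k T S).flip B.one) :=
  ⟨fun x y => by simp [B.isMonHomAlgebra.mul_one', B.isMonHomAlgebra.alpha_one],
    fun x => by simp [B.isMonHomAlgebra.alpha_one], rfl⟩

variable (k) in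
def scalars : MonoidalHomAlgebra k k where
  mul := LinearMap.mul k k
  one := 1
  alpha := LinearEquiv.refl k k
  isMonHomAlgebra := ⟨fun _ _ => rfl, fun a b c => (mul_assoc a b c).symm, rfl,
    fun a => one_mul a, fun a => mul_one a⟩

variable (A) in
lemma isHom_lid : IsHom ((scalars k).tensor A) A (TensorProduct.lid k T) :=
  isHom_tensor_of_tmul (fun a b c d => by simp [scalars, mul_smul, smul_comm a])
    (by simp [scalars]) (by simp [scalars])

variable (A) in
lemma isHom_rid : IsHom (A.tensor (scalars k)) A (TensorProduct.rid k T) :=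
  isHom_tensor_of_tmul (fun a b c d => by simp [scalars, mul_smul, smul_comm c])
    (by simp [scalars]) (by simp [scalars])

lemma isInvPair_of_alpha_eq {x y : T} (hx : A.alpha x = x) (hy : A.alpha y = y)
    (h₁ : A.mul x y = A.one) (h₂ : A.mul y x = A.one) : A.IsInvPair x y := by
  simp [IsInvPair, untwistMul, A.alpha.symm_apply_eq.2 hx.symm, A.alpha.symm_apply_eq.2 hy.symm,
    h₁, h₂]

/-- Both `α y` and `α² y` are `untwistMul`-inverses of `x = α x`. -/
lemma alpha_eq_of_mul_eq_one {x y : T} (hx : A.alpha x = x)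
    (h₁ : A.mul x y = A.one) (h₂ : A.mul y x = A.one) : A.alpha y = y := by
  have h : A.IsInvPair x (A.alpha y) := by
    simp [IsInvPair, untwistMul, A.alpha.symm_apply_eq.2 hx.symm, h₁, h₂]
  have h' := h.map (isHom_alpha A)
  rw [LinearEquiv.coe_coe, hx] at h'
  exact A.alpha.injective (h.unique h').symm

section Unwind

variable {f : T →ₗ[k] S} (hf : IsHom A B f) {r : S} (hr : B.alpha r = r)
include hf hr

lemma one_tmul_untwistMul_map (t : T' ⊗[k] T) :
    (A'.tensor B).untwistMul (A'.one ⊗ₜ r) (TensorProduct.map LinearMap.id (f ∘ₗ A.alpha) t)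
      = TensorProduct.map LinearMap.id (B.mul r ∘ₗ f) t := by
  have hr' : B.alpha.symm r = r := B.alpha.symm_apply_eq.2 hr.symm
  induction t using TensorProduct.induction_on with
  | zero => simp [untwistMul]
  | add x y hx hy => simp_all [untwistMul]
  | tmul a b =>
    simp [untwistMul, hr', alpha_symm_one, hf.map_alpha, A'.isMonHomAlgebra.one_mul']

lemma map_untwistMul_one_tmul (t : T' ⊗[k] T) :
    (A'.tensor B).untwistMul (TensorProduct.map LinearMap.id (f ∘ₗ A.alpha) t) (A'.one ⊗ₜ r)
      = TensorProduct.map LinearMap.id (B.mul.flip r ∘ₗ f) t := by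
  have hr' : B.alpha.symm r = r := B.alpha.symm_apply_eq.2 hr.symm
  induction t using TensorProduct.induction_on with
  | zero => simp [untwistMul]
  | add x y hx hy => simp_all [untwistMul]
  | tmul a b =>
    simp [untwistMul, hr', alpha_symm_one, hf.map_alpha, A'.isMonHomAlgebra.mul_one']

lemma tmul_one_untwistMul_map (t : T ⊗[k] T') :
    (B.tensor A').untwistMul (r ⊗ₜ A'.one) (TensorProduct.map (f ∘ₗ A.alpha) LinearMap.id t)
      = TensorProduct.map (B.mul r ∘ₗ f) LinearMap.id t := by
  have hr' : B.alpha.symm r = r := B.alpha.symm_apply_eq.2 hr.symm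
  induction t using TensorProduct.induction_on with
  | zero => simp [untwistMul]
  | add x y hx hy => simp_all [untwistMul]
  | tmul a b =>
    simp [untwistMul, hr', alpha_symm_one, hf.map_alpha, A'.isMonHomAlgebra.one_mul']

lemma map_untwistMul_tmul_one (t : T ⊗[k] T') :
    (B.tensor A').untwistMul (TensorProduct.map (f ∘ₗ A.alpha) LinearMap.id t) (r ⊗ₜ A'.one)
      = TensorProduct.map (B.mul.flip r ∘ₗ f) LinearMap.id t := by
  have hr' : B.alpha.symm r = r := B.alpha.symm_apply_eq.2 hr.symm
  induction t using TensorProduct.induction_on with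
  | zero => simp [untwistMul]
  | add x y hx hy => simp_all [untwistMul]
  | tmul a b =>
    simp [untwistMul, hr', alpha_symm_one, hf.map_alpha, A'.isMonHomAlgebra.mul_one']

end Unwind

end MonoidalHomAlgebra
open MonoidalHomAlgebra

section Twist

variable {H : Type*} [AddCommGroup H] [Module k H]
  {mul : H →ₗ[k] H →ₗ[k] H} {one : H} {alpha : H ≃ₗ[k] H}
  {comul : H →ₗ[k] H ⊗[k] H} {counit : H →ₗ[k] k}

def IsMonHomBialgebra.toMonoidalHomAlgebra (hH : IsMonHomBialgebra mul one alpha comul counit) :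
    MonoidalHomAlgebra k H :=
  ⟨mul, one, alpha, ⟨hH.alpha_mul, hH.hom_assoc, hH.alpha_one, hH.one_mul', hH.mul_one'⟩⟩

variable (hH : IsMonHomBialgebra mul one alpha comul counit)

lemma IsMonHomBialgebra.tensor_mul :
    (hH.toMonoidalHomAlgebra.tensor hH.toMonoidalHomAlgebra).mul = mulT mul := rfl

lemma IsMonHomBialgebra.isHom_comul :
    IsHom hH.toMonoidalHomAlgebra (hH.toMonoidalHomAlgebra.tensor hH.toMonoidalHomAlgebra) comul :=
  ⟨hH.comul_mul, hH.comul_alpha, hH.comul_one⟩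

lemma IsMonHomBialgebra.isHom_counit : IsHom hH.toMonoidalHomAlgebra (scalars k) counit :=
  ⟨hH.counit_mul, hH.counit_alpha, hH.counit_one⟩

variable {σ ϱ : H ⊗[k] H} (hσ : IsTwist mul one alpha comul counit σ ϱ)
include hH hσ

lemma IsTwist.map_alpha_inv : map alpha.toLinearMap alpha.toLinearMap ϱ = ϱ :=
  alpha_eq_of_mul_eq_one (A := hH.toMonoidalHomAlgebra.tensor hH.toMonoidalHomAlgebra) hσ.T1
    hσ.mul_inv hσ.inv_mul

lemma IsTwist.isInvPair :
    (hH.toMonoidalHomAlgebra.tensor hH.toMonoidalHomAlgebra).IsInvPair σ ϱ :=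
  isInvPair_of_alpha_eq hσ.T1 (hσ.map_alpha_inv hH) hσ.mul_inv hσ.inv_mul

lemma IsTwist.counit_id_inv : TensorProduct.lid k H (map counit LinearMap.id ϱ) = one := by
  set Hh := hH.toMonoidalHomAlgebra
  have hε := (isHom_lid Hh).comp (hH.isHom_counit.tensorMap (isHom_id Hh))
  have h₁ := (hσ.isInvPair hH).map hε
  simp only [LinearMap.coe_comp, LinearEquiv.coe_coe, Function.comp_apply, hσ.T2l] at h₁
  exact ((isInvPair_one Hh).unique h₁).symm

lemma IsTwist.id_counit_inv : TensorProduct.rid k H (map LinearMap.id counit ϱ) = one := by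
  set Hh := hH.toMonoidalHomAlgebra
  have hε := (isHom_rid Hh).comp ((isHom_id Hh).tensorMap hH.isHom_counit)
  have h₁ := (hσ.isInvPair hH).map hε
  simp only [LinearMap.coe_comp, LinearEquiv.coe_coe, Function.comp_apply, hσ.T2r] at h₁
  exact ((isInvPair_one Hh).unique h₁).symm

lemma IsTwist.inv_cocycle :
    map LinearMap.id ((mulT mul).flip ϱ ∘ₗ comul) ϱ
      = TensorProduct.assoc k H H H (map ((mulT mul).flip ϱ ∘ₗ comul) LinearMap.id ϱ) := by
  set Hh := hH.toMonoidalHomAlgebra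
  -- Both sides of `T3` are `⋆`-products of invertible elements of `H ⊗ H ⊗ H`, and the inverses
  -- of these products are the two sides of the claim.
  have hρ := hσ.isInvPair hH
  have hΔα := hH.isHom_comul.comp (isHom_alpha Hh)
  have hL := (hρ.map (isHom_one_tmul Hh)).untwistMul (hρ.map ((isHom_id Hh).tensorMap hΔα))
  have hR := ((hρ.map (isHom_tmul_one Hh)).untwistMul
    (hρ.map (hΔα.tensorMap (isHom_id Hh)))).map (isHom_assoc Hh Hh Hh)
  simp only [mk_apply, LinearMap.flip_apply, LinearEquiv.coe_coe] at hL hR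
  have hσα : (Hh.tensor Hh).alpha σ = σ := hσ.T1
  have hϱα : (Hh.tensor Hh).alpha ϱ = ϱ := hσ.map_alpha_inv hH
  rw [one_tmul_untwistMul_map hH.isHom_comul hσα,
    map_untwistMul_one_tmul hH.isHom_comul hϱα] at hL
  rw [tmul_one_untwistMul_map hH.isHom_comul hσα,
    map_untwistMul_tmul_one hH.isHom_comul hϱα] at hR
  simp only [hH.tensor_mul] at hL hR
  have hT3 := hσ.T3
  simp only [map_map, LinearMap.comp_id] at hT3
  rw [← hT3] at hR
  exact hL.unique hR

end Twist

section ModuleAlgebra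

variable {H A : Type*} [AddCommGroup H] [Module k H] [AddCommGroup A] [Module k A]
  {mul : H →ₗ[k] H →ₗ[k] H} {one : H} {alpha : H ≃ₗ[k] H}
  {mulA : A →ₗ[k] A →ₗ[k] A} {oneA : A} {alA : A ≃ₗ[k] A} {act : H →ₗ[k] A →ₗ[k] A}

variable (mulA act) in
/-- In the paper's notation, `a ∘ b = twistedMul mulA act a b ϱ`. -/
def twistedMul (a b : A) : H ⊗[k] H →ₗ[k] A :=
  TensorProduct.lift mulA ∘ₗ map (act.flip a) (act.flip b)

variable (mulA act) in
def nestedMulRight (a b c : A) : H ⊗[k] (H ⊗[k] H) →ₗ[k] A :=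
  TensorProduct.lift mulA ∘ₗ map (act.flip a) (twistedMul mulA act b c)

variable (mulA act) in
def nestedMulLeft (a b c : A) : (H ⊗[k] H) ⊗[k] H →ₗ[k] A :=
  TensorProduct.lift mulA ∘ₗ map (twistedMul mulA act a b) (act.flip c)

@[simp] lemma twistedMul_tmul (a b : A) (h g : H) :
    twistedMul mulA act a b (h ⊗ₜ g) = mulA (act h a) (act g b) := rfl

@[simp] lemma nestedMulRight_tmul (a b c : A) (x : H) (w : H ⊗[k] H) :
    nestedMulRight mulA act a b c (x ⊗ₜ w) = mulA (act x a) (twistedMul mulA act b c w) := rfl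

@[simp] lemma nestedMulLeft_tmul (a b c : A) (w : H ⊗[k] H) (z : H) :
    nestedMulLeft mulA act a b c (w ⊗ₜ z) = mulA (twistedMul mulA act a b w) (act z c) := rfl

lemma lift_pairMap_tmul (t : H ⊗[k] H) (a b : A) :
    TensorProduct.lift mulA (pairMap act act t (a ⊗ₜ b)) = twistedMul mulA act a b t := by
  induction t using TensorProduct.induction_on with
  | zero => simp
  | add x y hx hy => simp only [map_add, LinearMap.add_apply, hx, hy]
  | tmul h g => simp

lemma alpha_twistedMul (hA : IsMonHomAlgebra mulA oneA alA)
    (hmod : IsHomModule mul one alpha alA act) (a b : A) (t : H ⊗[k] H) :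
    alA (twistedMul mulA act a b t)
      = twistedMul mulA act (alA a) (alA b) (map alpha.toLinearMap alpha.toLinearMap t) := by
  induction t using TensorProduct.induction_on with
  | zero => simp
  | add x y hx hy => simp only [map_add, hx, hy]
  | tmul h g => simp [hA.alpha_mul, hmod.compat]

section Unit

variable {counit : H →ₗ[k] k} (hA : IsMonHomAlgebra mulA oneA alA)
  (hma₂ : ∀ h, act h oneA = counit h • oneA)
include hA hma₂

lemma twistedMul_one_left (x : A) (t : H ⊗[k] H) :
    twistedMul mulA act oneA x t
      = alA (act (TensorProduct.lid k H (map counit LinearMap.id t)) x) := by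
  induction t using TensorProduct.induction_on with
  | zero => simp
  | add y z hy hz => simp only [map_add, LinearMap.add_apply, hy, hz]
  | tmul h g => simp [hma₂, hA.one_mul']

lemma twistedMul_one_right (x : A) (t : H ⊗[k] H) :
    twistedMul mulA act x oneA t
      = alA (act (TensorProduct.rid k H (map LinearMap.id counit t)) x) := by
  induction t using TensorProduct.induction_on with
  | zero => simp
  | add y z hy hz => simp only [map_add, LinearMap.add_apply, hy, hz]
  | tmul h g => simp [hma₂, hA.mul_one']

end Unit

lemma twistedMul_act_act (hmod : IsHomModule mul one alpha alA act) (p q : H) (b c : A)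
    (u : H ⊗[k] H) :
    twistedMul mulA act (act p b) (act q c) (map alpha.toLinearMap alpha.toLinearMap u)
      = twistedMul mulA act (alA b) (alA c) (mulT mul u (p ⊗ₜ q)) := by
  induction u using TensorProduct.induction_on with
  | zero => simp
  | add x y hx hy => simp only [map_add, LinearMap.add_apply, hx, hy]
  | tmul h g => simp [hmod.hom_smul]

lemma act_alpha_twistedMul {comul : H →ₗ[k] H ⊗[k] H} {counit : H →ₗ[k] k}
    (hH : IsMonHomBialgebra mul one alpha comul counit) (hmod : IsHomModule mul one alpha alA act)
    (hma₁ : ∀ h a b, act h (mulA a b)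
      = TensorProduct.lift mulA (pairMap act act (comul h) (a ⊗ₜ[k] b)))
    (g : H) (b c : A) (s : H ⊗[k] H) :
    act (alpha g) (twistedMul mulA act b c s)
      = twistedMul mulA act (alA b) (alA c) (mulT mul (comul g) s) := by
  induction s using TensorProduct.induction_on with
  | zero => simp
  | add x y hx hy => simp only [map_add, hx, hy]
  | tmul p q =>
    rw [twistedMul_tmul, hma₁, lift_pairMap_tmul, hH.comul_alpha, twistedMul_act_act hmod]

lemma nestedMulRight_assoc (hA : IsMonHomAlgebra mulA oneA alA)
    (hmod : IsHomModule mul one alpha alA act) (a b c : A) (w : (H ⊗[k] H) ⊗[k] H) :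
    nestedMulRight mulA act (alA a) b c
        (map alpha.toLinearMap LinearMap.id (TensorProduct.assoc k H H H w))
      = nestedMulLeft mulA act a b (alA c) (map LinearMap.id alpha.toLinearMap w) := by
  induction w using TensorProduct.induction_on with
  | zero => simp
  | add x y hx hy => simp only [map_add, hx, hy]
  | tmul w z =>
    induction w using TensorProduct.induction_on with
    | zero => simp
    | add x y hx hy => simp only [add_tmul, map_add, hx, hy]
    | tmul x y => simp [← hmod.compat, hA.hom_assoc]

section HomAssoc

variable {comul : H →ₗ[k] H ⊗[k] H} {counit : H →ₗ[k] k}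
  (hH : IsMonHomBialgebra mul one alpha comul counit) (hmod : IsHomModule mul one alpha alA act)
  (hma₁ : ∀ h a b, act h (mulA a b)
    = TensorProduct.lift mulA (pairMap act act (comul h) (a ⊗ₜ[k] b)))
include hH hmod hma₁

lemma twistedMul_twistedMul_eq_nestedMulRight (a b c : A) (s t : H ⊗[k] H) :
    twistedMul mulA act a (twistedMul mulA act b c s) (map alpha.toLinearMap alpha.toLinearMap t)
      = nestedMulRight mulA act a (alA b) (alA c)
          (map alpha.toLinearMap LinearMap.id
            (map LinearMap.id ((mulT mul).flip s ∘ₗ comul) t)) := by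
  induction t using TensorProduct.induction_on with
  | zero => simp
  | add x y hx hy => simp only [map_add, hx, hy]
  | tmul h g => simp [act_alpha_twistedMul hH hmod hma₁]

lemma twistedMul_twistedMul_eq_nestedMulLeft (a b c : A) (s t : H ⊗[k] H) :
    twistedMul mulA act (twistedMul mulA act a b s) c (map alpha.toLinearMap alpha.toLinearMap t)
      = nestedMulLeft mulA act (alA a) (alA b) c
          (map LinearMap.id alpha.toLinearMap
            (map ((mulT mul).flip s ∘ₗ comul) LinearMap.id t)) := by
  induction t using TensorProduct.induction_on with
  | zero => simp
  | add x y hx hy => simp only [map_add, hx, hy]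
  | tmul h g => simp [act_alpha_twistedMul hH hmod hma₁]

lemma twistedMul_hom_assoc (hA : IsMonHomAlgebra mulA oneA alA) {ϱ : H ⊗[k] H}
    (hϱ : map alpha.toLinearMap alpha.toLinearMap ϱ = ϱ)
    (hcocycle : map LinearMap.id ((mulT mul).flip ϱ ∘ₗ comul) ϱ
      = TensorProduct.assoc k H H H (map ((mulT mul).flip ϱ ∘ₗ comul) LinearMap.id ϱ))
    (a b c : A) :
    twistedMul mulA act (alA (alA a)) (twistedMul mulA act b c ϱ) ϱ
      = twistedMul mulA act (twistedMul mulA act a b ϱ) (alA (alA c)) ϱ := by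
  set D := (mulT mul).flip ϱ ∘ₗ comul
  calc twistedMul mulA act (alA (alA a)) (twistedMul mulA act b c ϱ) ϱ
      = nestedMulRight mulA act (alA (alA a)) (alA b) (alA c)
          (map alpha.toLinearMap LinearMap.id (map LinearMap.id D ϱ)) := by
        rw [← twistedMul_twistedMul_eq_nestedMulRight hH hmod hma₁, hϱ]
    _ = nestedMulRight mulA act (alA (alA a)) (alA b) (alA c)
          (map alpha.toLinearMap LinearMap.id
            (TensorProduct.assoc k H H H (map D LinearMap.id ϱ))) := by
        rw [hcocycle]
    _ = nestedMulLeft mulA act (alA a) (alA b) (alA (alA c))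
          (map LinearMap.id alpha.toLinearMap (map D LinearMap.id ϱ)) :=
        nestedMulRight_assoc hA hmod _ _ _ _
    _ = twistedMul mulA act (twistedMul mulA act a b ϱ) (alA (alA c)) ϱ := by
        rw [← twistedMul_twistedMul_eq_nestedMulLeft hH hmod hma₁, hϱ]

end HomAssoc

end ModuleAlgebra

end HomTwist

namespace HomTwist
open TensorProduct

/-- (Proposition 4.4(1)) Twisting the product of an `H`-Hom-module
algebra `A` by the inverse `ϱ` of a Drinfeld twist, `a ∘ b = (ϱ⁽¹⁾·a)(ϱ⁽²⁾·b)`,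
yields a monoidal Hom-algebra `(A, α_A², ∘, 1_A)`. -/
theorem module_algebra_twist
    {k H A : Type*} [CommRing k] [AddCommGroup H] [Module k H]
    [AddCommGroup A] [Module k A]
    (mul : H →ₗ[k] H →ₗ[k] H) (one : H) (alpha : H ≃ₗ[k] H)
    (comul : H →ₗ[k] H ⊗[k] H) (counit : H →ₗ[k] k) (σ ϱ : H ⊗[k] H)
    (hH : IsMonHomBialgebra mul one alpha comul counit)
    (hσ : IsTwist mul one alpha comul counit σ ϱ)
    (mulA : A →ₗ[k] A →ₗ[k] A) (oneA : A) (alA : A ≃ₗ[k] A)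
    (act : H →ₗ[k] A →ₗ[k] A)
    (hA : IsMonHomAlgebra mulA oneA alA)
    (hmod : IsHomModule mul one alpha alA act)
    -- module-algebra compatibility: `h·(ab) = (h₁·a)(h₂·b)` and `h·1 = ε(h)1`:
    (hma₁ : ∀ h a b, act h (mulA a b)
      = TensorProduct.lift mulA (pairMap act act (comul h) (a ⊗ₜ[k] b)))
    (hma₂ : ∀ h, act h oneA = counit h • oneA) :
    IsMonHomAlgebra
      ((TensorProduct.mk k A A).compr₂ (TensorProduct.lift mulA ∘ₗ pairMap act act ϱ))
      oneA (alA.trans alA) := by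
  have hϱ := hσ.map_alpha_inv hH
  refine ⟨fun a b => ?_, fun a b c => ?_, by simp [hA.alpha_one], fun a => ?_, fun a => ?_⟩ <;>
    simp only [LinearMap.compr₂_apply, mk_apply, LinearMap.coe_comp, Function.comp_apply,
      lift_pairMap_tmul, LinearEquiv.trans_apply]
  · rw [alpha_twistedMul hA hmod, alpha_twistedMul hA hmod, hϱ, hϱ]
  · exact twistedMul_hom_assoc hH hmod hma₁ hA hϱ (hσ.inv_cocycle hH) a b c
  · rw [twistedMul_one_left hA hma₂, hσ.counit_id_inv hH, hmod.one_smul']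
  · rw [twistedMul_one_right hA hma₂, hσ.id_counit_inv hH, hmod.one_smul']

end HomTwist
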